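/- Fix c with 0 < c < 1. The function p ↦ ((1−c)/(1−p))·((2p−c)(1−p)/(2p(c−p)) + 1/(2c)) is convex on the open interval (c/2, c) (the region where p < c < 2p, i.e. the residual-queue term is positive). -/

import Mathlib

/-!
On `(c/2, c)` the waiting time has the partial-fraction form
`(1-c)/2 · ((c-p)⁻¹ - p⁻¹) + (1-c)/(2c) · (1-p)⁻¹`. The last term is convex as the inverse of a
positive affine function. The bracket is a convex term minus a concave one; it is still convex
because its second derivative `2/(c-p)³ - 2/p³` is nonnegative exactly when `c - p ≤ p`.
-/

open Set

lemma convexOn_inv_sub (a : ℝ) : ConvexOn ℝ (Iio a) fun p => (a - p)⁻¹ := by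
  have h := (convexOn_zpow (𝕜 := ℝ) (-1)).comp_affineMap (AffineMap.lineMap a (a - 1))
  have hdom : AffineMap.lineMap a (a - 1) ⁻¹' Ioi 0 = Iio a := by
    ext p; simp [AffineMap.lineMap_apply_ring']
  have hfun : (fun x : ℝ => x ^ (-1 : ℤ)) ∘ AffineMap.lineMap a (a - 1) = fun p => (a - p)⁻¹ := by
    ext p; simp [AffineMap.lineMap_apply_ring', neg_add_eq_sub]
  rwa [hdom, hfun] at h

lemma hasDerivAt_inv_sub_sub_inv {c x : ℝ} (hx : x ≠ 0) (hxc : x ≠ c) :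
    HasDerivAt (fun p => (c - p)⁻¹ - p⁻¹) (((c - x) ^ 2)⁻¹ + (x ^ 2)⁻¹) x := by
  have hcx : c - x ≠ 0 := sub_ne_zero.2 hxc.symm
  exact ((((hasDerivAt_id' x).const_sub c).inv hcx).sub (hasDerivAt_inv hx)).congr_deriv
    (by field_simp; ring)

lemma hasDerivAt_inv_sq_sub_add_inv_sq {c x : ℝ} (hx : x ≠ 0) (hxc : x ≠ c) :
    HasDerivAt (fun p => ((c - p) ^ 2)⁻¹ + (p ^ 2)⁻¹)
      (2 * ((c - x) ^ 3)⁻¹ - 2 * (x ^ 3)⁻¹) x := by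
  have hcx : c - x ≠ 0 := sub_ne_zero.2 hxc.symm
  exact (((((hasDerivAt_id' x).const_sub c).fun_pow 2).inv (pow_ne_zero 2 hcx)).add
    (((hasDerivAt_id' x).fun_pow 2).inv (pow_ne_zero 2 hx))).congr_deriv (by field_simp; ring)

lemma convexOn_inv_sub_sub_inv (c : ℝ) :
    ConvexOn ℝ (Ioo (c / 2) c) fun p => (c - p)⁻¹ - p⁻¹ := by
  have hbounds : ∀ x ∈ Ioo (c / 2) c, 0 < c - x ∧ c - x < x := fun x hx => by
    constructor <;> linarith [hx.1, hx.2]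
  have hne : ∀ x ∈ Ioo (c / 2) c, x ≠ 0 ∧ x ≠ c := fun x hx => by
    obtain ⟨h₀, h₁⟩ := hbounds x hx
    constructor <;> linarith
  have hderiv₁ : ∀ x ∈ Ioo (c / 2) c, HasDerivAt (fun p => (c - p)⁻¹ - p⁻¹)
      (((c - x) ^ 2)⁻¹ + (x ^ 2)⁻¹) x := fun x hx =>
    hasDerivAt_inv_sub_sub_inv (hne x hx).1 (hne x hx).2
  refine convexOn_of_hasDerivWithinAt2_nonneg (convex_Ioo _ _)
    (f' := fun x => ((c - x) ^ 2)⁻¹ + (x ^ 2)⁻¹)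
    (f'' := fun x => 2 * ((c - x) ^ 3)⁻¹ - 2 * (x ^ 3)⁻¹)
    (fun x hx => (hderiv₁ x hx).continuousAt.continuousWithinAt) ?_ ?_ ?_ <;>
    simp only [interior_Ioo]
  · exact fun x hx => (hderiv₁ x hx).hasDerivWithinAt
  · exact fun x hx =>
      (hasDerivAt_inv_sq_sub_add_inv_sq (hne x hx).1 (hne x hx).2).hasDerivWithinAt
  · intro x hx
    obtain ⟨h₀, h₁⟩ := hbounds x hx
    have : (x ^ 3)⁻¹ ≤ ((c - x) ^ 3)⁻¹ :=
      inv_anti₀ (by positivity) (pow_le_pow_left₀ h₀.le h₁.le 3)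
    linarith

lemma waitingTime_eq_partialFractions {c p : ℝ} (hc : c ≠ 0) (hp : p ≠ 0) (hpc : p ≠ c)
    (hp1 : p ≠ 1) :
    (1 - c) / (1 - p) * ((2 * p - c) * (1 - p) / (2 * p * (c - p)) + 1 / (2 * c)) =
      (1 - c) / 2 * ((c - p)⁻¹ - p⁻¹) + (1 - c) / (2 * c) * (1 - p)⁻¹ := by
  have hcp : c - p ≠ 0 := sub_ne_zero.2 hpc.symm
  have h1p : 1 - p ≠ 0 := sub_ne_zero.2 hp1.symm
  field_simp
  ring

/-- For fixed `0 < c < 1`, the mean waiting time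
`p ↦ ((1-c)/(1-p)) * ((2p-c)(1-p)/(2p(c-p)) + 1/(2c))` (valid in the region
`p < c < 2p`, where the residual-queue term is positive) is convex on the open
interval `(c/2, c)`. -/
theorem stmt_9 (c : ℝ) (hc0 : 0 < c) (hc1 : c < 1) :
    ConvexOn ℝ (Set.Ioo (c / 2) c)
      (fun p : ℝ => ((1 - c) / (1 - p)) *
        ((2 * p - c) * (1 - p) / (2 * p * (c - p)) + 1 / (2 * c))) := by
  have hIoo_sub : Ioo (c / 2) c ⊆ Iio 1 := fun p hp => hp.2.trans hc1
  have hconv : ConvexOn ℝ (Ioo (c / 2) c)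
      fun p => (1 - c) / 2 * ((c - p)⁻¹ - p⁻¹) + (1 - c) / (2 * c) * (1 - p)⁻¹ :=
    ((convexOn_inv_sub_sub_inv c).smul (by positivity)).add
      (((convexOn_inv_sub 1).subset hIoo_sub (convex_Ioo _ _)).smul (by positivity))
  refine hconv.congr fun p hp => ?_
  have hp0 : 0 < p := lt_trans (by positivity) hp.1
  exact (waitingTime_eq_partialFractions hc0.ne' hp0.ne' hp.2.ne (hIoo_sub hp).ne).symm
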